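/- Let s > 1 be an integer. Suppose there exist nonzero integers w, m, y such that y divides m and w divides smy + 1 or smy − 1. Then for every integer r with r ≡ w (mod sm) and r ∉ {0, 1, −1, w}, the number s/r is a 2-step relation number. -/

import Mathlib

/-- `a = [[1,0],[1,1]]` as an element of `SL(2, ℂ)`. -/
def matA : Matrix.SpecialLinearGroup (Fin 2) ℂ :=
  ⟨!![1, 0; 1, 1], by simp [Matrix.det_fin_two_of]⟩

/-- `b_q = [[1,q],[0,1]]` as an element of `SL(2, ℂ)`. -/
def matB (q : ℂ) : Matrix.SpecialLinearGroup (Fin 2) ℂ :=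
  ⟨!![1, q; 0, 1], by simp [Matrix.det_fin_two_of]⟩

/-- `q` is a relation number: the homomorphism `F₂ → SL(2,ℂ)`, `x ↦ a`, `y ↦ b_q`,
is not injective. -/
def IsRelationNumber (q : ℂ) : Prop :=
  ¬ Function.Injective
    (FreeGroup.lift (fun i : Bool => if i then matA else matB q) :
      FreeGroup Bool →* Matrix.SpecialLinearGroup (Fin 2) ℂ)

/-- `q` is an `ℓ`-step relation number: there are `k ≤ ℓ` and nonzero integers
`m_1, …, m_{2k+1}` with `b_q^{m_1} a^{m_2} ⋯ b_q^{m_{2k+1}}` lower triangular. -/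
def IsStepRelationNumber (ℓ : ℕ) (q : ℂ) : Prop :=
  ∃ k : ℕ, k ≤ ℓ ∧ ∃ m : Fin (2 * k + 1) → ℤ, (∀ i, m i ≠ 0) ∧
    ((List.ofFn (fun i : Fin (2 * k + 1) =>
      (if (i : ℕ) % 2 = 0 then matB q else matA) ^ (m i))).prod).val 0 1 = 0

/-- The residue class `w + smℤ` is `s`-good with good representative `w`. -/
def IsGoodRep (s w m : ℤ) : Prop :=
  ∃ y : ℤ, y * (Int.gcd w (s * m) : ℤ) ∣ m * (Int.gcd w s : ℤ) ∧
    (w ∣ s * m * y + (Int.gcd w (s * m) : ℤ) ∨ w ∣ s * m * y - (Int.gcd w (s * m) : ℤ))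

/-- Auxiliary: the lower-triangular unipotent `[[1,0],[x,1]]`. -/
def matAx (x : ℂ) : Matrix.SpecialLinearGroup (Fin 2) ℂ :=
  ⟨!![1, 0; x, 1], by simp [Matrix.det_fin_two_of]⟩

lemma matB_mul (p q : ℂ) : matB p * matB q = matB (p + q) := by
  apply Subtype.ext
  show (matB p).val * (matB q).val = _
  simp only [matB, Matrix.mul_fin_two]
  norm_num [add_comm]

lemma matB_zero : matB 0 = 1 := by
  apply Subtype.ext
  show (matB 0).val = 1
  simp only [matB]
  exact (Matrix.one_fin_two).symm

lemma matB_inv (q : ℂ) : (matB q)⁻¹ = matB (-q) := by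
  apply inv_eq_of_mul_eq_one_right
  rw [matB_mul]
  simpa using matB_zero

lemma matB_zpow (q : ℂ) (n : ℤ) : matB q ^ n = matB (n * q) := by
  induction n using Int.induction_on with
  | zero => simpa using matB_zero.symm
  | succ k ih =>
      rw [zpow_add_one, ih, matB_mul]
      congr 1
      push_cast
      ring
  | pred k ih =>
      rw [zpow_sub_one, ih, matB_inv q, matB_mul]
      congr 1
      push_cast
      ring

lemma matAx_mul (p q : ℂ) : matAx p * matAx q = matAx (p + q) := by
  apply Subtype.ext
  show (matAx p).val * (matAx q).val = _
  simp only [matAx, Matrix.mul_fin_two]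
  norm_num [add_comm]

lemma matAx_zero : matAx 0 = 1 := by
  apply Subtype.ext
  show (matAx 0).val = 1
  simp only [matAx]
  exact (Matrix.one_fin_two).symm

lemma matAx_inv (q : ℂ) : (matAx q)⁻¹ = matAx (-q) := by
  apply inv_eq_of_mul_eq_one_right
  rw [matAx_mul]
  simpa using matAx_zero

lemma matAx_zpow (q : ℂ) (n : ℤ) : matAx q ^ n = matAx (n * q) := by
  induction n using Int.induction_on with
  | zero => simpa using matAx_zero.symm
  | succ k ih =>
      rw [zpow_add_one, ih, matAx_mul]
      congr 1
      push_cast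
      ring
  | pred k ih =>
      rw [zpow_sub_one, ih, matAx_inv q, matAx_mul]
      congr 1
      push_cast
      ring

lemma matA_eq : matA = matAx 1 := rfl

lemma matA_zpow (n : ℤ) : matA ^ n = matAx (n : ℂ) := by
  rw [matA_eq, matAx_zpow, mul_one]

set_option maxHeartbeats 1000000 in
lemma word01c (x1 x2 x3 x4 x5 : ℂ) :
    ((matB x1 * (matAx x2 * (matB x3 * (matAx x4 * matB x5)))).val) 0 1
    = x1 + x3 + x5 + x1*x2*x3 + x1*x2*x5 + x3*x4*x5 + x1*x4*x5 + x1*x2*x3*x4*x5 := by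
  show ((matB x1).val * ((matAx x2).val * ((matB x3).val * ((matAx x4).val * (matB x5).val)))) 0 1 = _
  simp only [Matrix.SpecialLinearGroup.coe_mul, matB, matAx, Matrix.mul_fin_two]
  norm_num [Matrix.cons_val_one, Matrix.head_cons, Matrix.cons_val_zero]
  ring

/-- Producing a 2-step witness from a 5-letter word. -/
lemma word_entry (q : ℂ) (a b c d e : ℤ)
    (ha : a ≠ 0) (hb : b ≠ 0) (hc : c ≠ 0) (hd : d ≠ 0) (he : e ≠ 0)
    (hval : ((matB q ^ a * (matA ^ b * (matB q ^ c * (matA ^ d * matB q ^ e)))).val) 0 1 = 0) :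
    IsStepRelationNumber 2 q := by
  refine ⟨2, le_refl 2, ![a, b, c, d, e], ?_, ?_⟩
  · intro i
    fin_cases i
    · exact ha
    · exact hb
    · exact hc
    · exact hd
    · exact he
  · have hl : (List.ofFn (fun i : Fin (2 * 2 + 1) =>
        (if (i : ℕ) % 2 = 0 then matB q else matA) ^ ((![a, b, c, d, e] : Fin 5 → ℤ) i)))
        = [matB q ^ a, matA ^ b, matB q ^ c, matA ^ d, matB q ^ e] := by
      simp [List.ofFn_succ]
    rw [hl]
    simp only [List.prod_cons, List.prod_nil, mul_one]
    exact hval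

theorem stmt10 (s w m y : ℤ) (hs : 1 < s) (hw : w ≠ 0) (hm : m ≠ 0) (hy : y ≠ 0)
    (hym : y ∣ m) (hdvd : w ∣ s * m * y + 1 ∨ w ∣ s * m * y - 1)
    (r : ℤ) (hr : s * m ∣ r - w) (hr0 : r ≠ 0) (hr1 : r ≠ 1) (hrm1 : r ≠ -1)
    (hrw : r ≠ w) :
    IsStepRelationNumber 2 ((s : ℂ) / (r : ℂ)) := by
  obtain ⟨m', rfl⟩ := hym
  have hm' : m' ≠ 0 := by rintro rfl; exact hm (by ring)
  obtain ⟨t, ht⟩ := hr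
  have hrr : r = w + s * (y * m') * t := by linarith
  have ht0 : t ≠ 0 := by rintro rfl; apply hrw; rw [hrr]; ring
  have hrC : (r : ℂ) ≠ 0 := Int.cast_ne_zero.mpr hr0
  have hqr : (r : ℂ) * ((s : ℂ) / (r : ℂ)) = (s : ℂ) := by field_simp
  rcases hdvd with ⟨z, hz⟩ | ⟨z, hz⟩
  · -- ε = 1 : s*(y*m')*y + 1 = w*z
    have hn0 : y + z * t ≠ 0 := by
      intro h
      have hrz : r * z = 1 := by linear_combination z * hrr - hz + (s * y * m') * h
      rcases Int.isUnit_iff.mp (IsUnit.of_mul_eq_one z hrz) with h1 | h1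
      · exact hr1 h1
      · exact hrm1 h1
    have KEY : (r:ℤ)^2 * ((r*y) + t + (-(r*(y+z*t))))
        + s*r*((r*y)*(m'*(y+z*t))*(t + (-(r*(y+z*t))))
            + (-(y*m'))*(-(r*(y+z*t)))*((r*y) + t))
        + s^2*((r*y)*(m'*(y+z*t))*t*(-(y*m'))*(-(r*(y+z*t)))) = 0 := by
      linear_combination (t*(r + s*(r*(y*m')*(y+z*t)))*r) * hz
        - (t*(r + s*(r*(y*m')*(y+z*t)))*r*z) * hrr
    have KEYC : ((r:ℂ))^2 * (((r:ℂ)*(y:ℂ)) + (t:ℂ) + (-((r:ℂ)*((y:ℂ)+(z:ℂ)*(t:ℂ)))))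
        + (s:ℂ)*(r:ℂ)*(((r:ℂ)*(y:ℂ))*((m':ℂ)*((y:ℂ)+(z:ℂ)*(t:ℂ)))*((t:ℂ) + (-((r:ℂ)*((y:ℂ)+(z:ℂ)*(t:ℂ)))))
            + (-((y:ℂ)*(m':ℂ)))*(-((r:ℂ)*((y:ℂ)+(z:ℂ)*(t:ℂ))))*(((r:ℂ)*(y:ℂ)) + (t:ℂ)))
        + (s:ℂ)^2*(((r:ℂ)*(y:ℂ))*((m':ℂ)*((y:ℂ)+(z:ℂ)*(t:ℂ)))*(t:ℂ)*(-((y:ℂ)*(m':ℂ)))*(-((r:ℂ)*((y:ℂ)+(z:ℂ)*(t:ℂ))))) = 0 := by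
      exact_mod_cast congrArg (fun x : ℤ => (x : ℂ)) KEY
    refine word_entry _ (r*y) (m'*(y+z*t)) t (-(y*m')) (-(r*(y+z*t)))
      (mul_ne_zero hr0 hy) (mul_ne_zero hm' hn0) ht0
      (neg_ne_zero.mpr (mul_ne_zero hy hm')) (neg_ne_zero.mpr (mul_ne_zero hr0 hn0)) ?_
    rw [matB_zpow, matB_zpow, matB_zpow, matA_zpow, matA_zpow, word01c]
    push_cast
    refine mul_left_cancel₀ (pow_ne_zero 2 hrC) ?_
    rw [mul_zero]
    linear_combination ((s:ℂ)/(r:ℂ)) * KEYC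
      + (((s:ℂ)/(r:ℂ)) * ((((r:ℂ)*(y:ℂ))*((m':ℂ)*((y:ℂ)+(z:ℂ)*(t:ℂ)))*((t:ℂ) + (-((r:ℂ)*((y:ℂ)+(z:ℂ)*(t:ℂ)))))
            + (-((y:ℂ)*(m':ℂ)))*(-((r:ℂ)*((y:ℂ)+(z:ℂ)*(t:ℂ))))*(((r:ℂ)*(y:ℂ)) + (t:ℂ))) * (r:ℂ)
          + (((r:ℂ)*(y:ℂ))*((m':ℂ)*((y:ℂ)+(z:ℂ)*(t:ℂ)))*(t:ℂ)*(-((y:ℂ)*(m':ℂ)))*(-((r:ℂ)*((y:ℂ)+(z:ℂ)*(t:ℂ))))) * ((r:ℂ)*((s:ℂ)/(r:ℂ))+(s:ℂ)))) * hqr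
  · -- ε = -1 : s*(y*m')*y - 1 = w*z
    have hn0 : y + z * t ≠ 0 := by
      intro h
      have hrz : r * z = -1 := by linear_combination z * hrr - hz + (s * y * m') * h
      have hu : IsUnit r := IsUnit.of_mul_eq_one (-z) (by linarith [hrz])
      rcases Int.isUnit_iff.mp hu with h1 | h1
      · exact hr1 h1
      · exact hrm1 h1
    have KEY : (r:ℤ)^2 * ((-(r*y)) + t + (r*(y+z*t)))
        + s*r*((-(r*y))*(m'*(y+z*t))*(t + (r*(y+z*t)))
            + (-(y*m'))*(r*(y+z*t))*((-(r*y)) + t))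
        + s^2*((-(r*y))*(m'*(y+z*t))*t*(-(y*m'))*(r*(y+z*t))) = 0 := by
      linear_combination (-(t*(r - s*(r*(y*m')*(y+z*t)))*r)) * hz
        + (t*(r - s*(r*(y*m')*(y+z*t)))*r*z) * hrr
    have KEYC : ((r:ℂ))^2 * ((-((r:ℂ)*(y:ℂ))) + (t:ℂ) + ((r:ℂ)*((y:ℂ)+(z:ℂ)*(t:ℂ))))
        + (s:ℂ)*(r:ℂ)*((-((r:ℂ)*(y:ℂ)))*((m':ℂ)*((y:ℂ)+(z:ℂ)*(t:ℂ)))*((t:ℂ) + ((r:ℂ)*((y:ℂ)+(z:ℂ)*(t:ℂ))))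
            + (-((y:ℂ)*(m':ℂ)))*((r:ℂ)*((y:ℂ)+(z:ℂ)*(t:ℂ)))*((-((r:ℂ)*(y:ℂ))) + (t:ℂ)))
        + (s:ℂ)^2*((-((r:ℂ)*(y:ℂ)))*((m':ℂ)*((y:ℂ)+(z:ℂ)*(t:ℂ)))*(t:ℂ)*(-((y:ℂ)*(m':ℂ)))*((r:ℂ)*((y:ℂ)+(z:ℂ)*(t:ℂ)))) = 0 := by
      exact_mod_cast congrArg (fun x : ℤ => (x : ℂ)) KEY
    refine word_entry _ (-(r*y)) (m'*(y+z*t)) t (-(y*m')) (r*(y+z*t))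
      (neg_ne_zero.mpr (mul_ne_zero hr0 hy)) (mul_ne_zero hm' hn0) ht0
      (neg_ne_zero.mpr (mul_ne_zero hy hm')) (mul_ne_zero hr0 hn0) ?_
    rw [matB_zpow, matB_zpow, matB_zpow, matA_zpow, matA_zpow, word01c]
    push_cast
    refine mul_left_cancel₀ (pow_ne_zero 2 hrC) ?_
    rw [mul_zero]
    linear_combination ((s:ℂ)/(r:ℂ)) * KEYC
      + (((s:ℂ)/(r:ℂ)) * (((-((r:ℂ)*(y:ℂ)))*((m':ℂ)*((y:ℂ)+(z:ℂ)*(t:ℂ)))*((t:ℂ) + ((r:ℂ)*((y:ℂ)+(z:ℂ)*(t:ℂ))))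
            + (-((y:ℂ)*(m':ℂ)))*((r:ℂ)*((y:ℂ)+(z:ℂ)*(t:ℂ)))*((-((r:ℂ)*(y:ℂ))) + (t:ℂ))) * (r:ℂ)
          + ((-((r:ℂ)*(y:ℂ)))*((m':ℂ)*((y:ℂ)+(z:ℂ)*(t:ℂ)))*(t:ℂ)*(-((y:ℂ)*(m':ℂ)))*((r:ℂ)*((y:ℂ)+(z:ℂ)*(t:ℂ)))) * ((r:ℂ)*((s:ℂ)/(r:ℂ))+(s:ℂ)))) * hqr
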